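/- arXiv:2510.08887 — 7 statements merged into one kernel-verified Lean document; each statement's English description precedes it below -/
import Mathlib

section
/- Let N_R, N_T, K, Q be positive integers, σ > 0 a real number, and Σ an (N_T·N_R)×(N_T·N_R) complex matrix. For each q = 1,…,Q let v_q ∈ ℂ^{N_T} (viewed as an N_T×1 matrix) and let W_q be a complex N_R×K matrix with W_qᴴ·W_q invertible. Form the (N_T·N_R)×(K·Q) matrix X = [v_1^* ⊗ W_1, …, v_Q^* ⊗ W_Q] by horizontal concatenation of the blocks v_q^* ⊗ W_q, and the (K·Q)×(K·Q) block-diagonal matrix Ξ = σ²·blkdiag(W_1ᴴ·W_1, …, W_Qᴴ·W_Q). Then det(I_{KQ} + Ξ⁻¹·Xᴴ·Σ·X) = det(I_{N_T·N_R} + σ⁻²·(∑_{q=1}^{Q} (v_q^*·v_qᵀ) ⊗ (W_q·(W_qᴴ·W_q)⁻¹·W_qᴴ))·Σ). -/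
/-!
By Sylvester's determinant identity `det (1 + A B) = det (1 + B A)` the left side equals
`det (1 + X Ξ⁻¹ Xᴴ Σ)`, and since `Ξ⁻¹ = σ⁻² blkdiag((W_qᴴW_q)⁻¹)`, multiplying out
`X Ξ⁻¹ Xᴴ` block by block gives `σ⁻² ∑_q (v_q^* v_qᵀ) ⊗ W_q (W_qᴴW_q)⁻¹ W_qᴴ`.
-/

open Matrix Finset
open scoped Kronecker

namespace Matrix

variable {m n o ι K R : Type*}

theorem inv_smul₀ [Fintype m] [DecidableEq m] [Field K] (c : K) (A : Matrix m m K) :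
    (c • A)⁻¹ = c⁻¹ • A⁻¹ := by
  rcases eq_or_ne c 0 with rfl | hc
  · simp
  by_cases hA : IsUnit A.det
  · exact inv_smul' A (Units.mk0 c hc) hA
  · have hcA : ¬IsUnit (c • A).det := by
      rwa [det_smul, IsUnit.mul_iff, and_iff_right (hc.isUnit.pow _)]
    rw [nonsing_inv_apply_not_isUnit _ hcA, nonsing_inv_apply_not_isUnit _ hA, smul_zero]

theorem inv_blockDiagonal [Fintype m] [DecidableEq m] [Fintype ι] [DecidableEq ι] [CommRing R]
    (D : ι → Matrix m m R) (hD : ∀ i, IsUnit (D i).det) :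
    (blockDiagonal D)⁻¹ = blockDiagonal fun i => (D i)⁻¹ := by
  refine inv_eq_right_inv ?_
  rw [← blockDiagonal_mul, ← blockDiagonal_one]
  exact congrArg blockDiagonal (funext fun i => mul_nonsing_inv _ (hD i))

/-- The block row `[v₁^* ⊗ W₁, …, v_Q^* ⊗ W_Q]`, the column `(k, q)` being column `k` of the
`q`-th block. -/
def starKroneckerConcat [Star R] [Mul R] (v : ι → n → R) (W : ι → Matrix m o R) :
    Matrix (n × m) (o × ι) R :=
  of fun p kq => star (v kq.2 p.1) * W kq.2 p.2 kq.1

theorem starKroneckerConcat_mul_blockDiagonal_mul_conjTranspose [Fintype n] [Fintype o]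
    [Fintype ι] [DecidableEq ι] [CommSemiring R] [StarRing R]
    (v : ι → n → R) (W : ι → Matrix m o R) (D : ι → Matrix o o R) :
    starKroneckerConcat v W * blockDiagonal D * (starKroneckerConcat v W)ᴴ =
      ∑ i, vecMulVec (fun a => star (v i a)) (v i) ⊗ₖ (W i * D i * (W i)ᴴ) := by
  ext p p'
  simp only [starKroneckerConcat, mul_apply, sum_apply, blockDiagonal_apply, conjTranspose_apply,
    of_apply, kroneckerMap_apply, vecMulVec_apply, Fintype.sum_prod_type, mul_ite, mul_zero,
    sum_ite_eq', mem_univ, if_true, star_mul', star_star, mul_sum, sum_mul]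
  rw [sum_comm]
  refine sum_congr rfl fun i _ => sum_congr rfl fun a _ => sum_congr rfl fun b _ => ?_
  ring

end Matrix

theorem stmt_2_general (N_R N_T K Q : ℕ) (σ : ℝ)
    (Sgm : Matrix (Fin N_T × Fin N_R) (Fin N_T × Fin N_R) ℂ)
    (v : Fin Q → Fin N_T → ℂ)
    (W : Fin Q → Matrix (Fin N_R) (Fin K) ℂ)
    (hW : ∀ q, IsUnit ((W q)ᴴ * W q))
    -- `X = [v_1^* ⊗ W_1, …, v_Q^* ⊗ W_Q]` : horizontal concatenation of the blocks
    (X : Matrix (Fin N_T × Fin N_R) (Fin K × Fin Q) ℂ)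
    (hX : X = Matrix.of fun p kq => star (v kq.2 p.1) * W kq.2 p.2 kq.1)
    -- `Ξ = σ²·blkdiag(W_1ᴴ·W_1, …, W_Qᴴ·W_Q)`
    (Ξ : Matrix (Fin K × Fin Q) (Fin K × Fin Q) ℂ)
    (hΞ : Ξ = Matrix.blockDiagonal fun q => ((σ : ℂ) ^ 2) • ((W q)ᴴ * W q)) :
    (1 + Ξ⁻¹ * Xᴴ * Sgm * X).det =
      (1 + (((σ : ℂ) ^ 2)⁻¹) •
        ((∑ q : Fin Q,
            (Matrix.vecMulVec (fun i => star (v q i)) (v q)) ⊗ₖ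
              (W q * ((W q)ᴴ * W q)⁻¹ * (W q)ᴴ)) * Sgm)).det := by
  replace hX : X = starKroneckerConcat v W := hX
  have hΞinv : Ξ⁻¹ = ((σ : ℂ) ^ 2)⁻¹ • blockDiagonal fun q => ((W q)ᴴ * W q)⁻¹ := by
    rw [hΞ, ← inv_blockDiagonal _ fun q => (isUnit_iff_isUnit_det _).mp (hW q), ← inv_smul₀,
      ← blockDiagonal_smul]
    rfl
  calc (1 + Ξ⁻¹ * Xᴴ * Sgm * X).det = (1 + X * (Ξ⁻¹ * Xᴴ * Sgm)).det := det_one_add_mul_comm _ _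
    _ = (1 + X * Ξ⁻¹ * Xᴴ * Sgm).det := by simp only [Matrix.mul_assoc]
    _ = _ := by
      rw [hX, hΞinv, Matrix.mul_smul, Matrix.smul_mul, Matrix.smul_mul,
        starKroneckerConcat_mul_blockDiagonal_mul_conjTranspose]

/-- With `X = [v_1^* ⊗ W_1, …, v_Q^* ⊗ W_Q]` and
`Ξ = σ²·blkdiag(W_1ᴴW_1, …, W_QᴴW_Q)`,
`det(I + Ξ⁻¹·Xᴴ·Σ·X) = det(I + σ⁻²·(∑_q (v_q^*·v_qᵀ) ⊗ (W_q(W_qᴴW_q)⁻¹W_qᴴ))·Σ)`. -/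
theorem stmt_2 (N_R N_T K Q : ℕ) (hNR : 0 < N_R) (hNT : 0 < N_T)
    (hK : 0 < K) (hQ : 0 < Q) (σ : ℝ) (hσ : 0 < σ)
    (Sgm : Matrix (Fin N_T × Fin N_R) (Fin N_T × Fin N_R) ℂ)
    (v : Fin Q → Fin N_T → ℂ)
    (W : Fin Q → Matrix (Fin N_R) (Fin K) ℂ)
    (hW : ∀ q, IsUnit ((W q)ᴴ * W q))
    -- `X = [v_1^* ⊗ W_1, …, v_Q^* ⊗ W_Q]` : horizontal concatenation of the blocks
    (X : Matrix (Fin N_T × Fin N_R) (Fin K × Fin Q) ℂ)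
    (hX : X = Matrix.of fun p kq => star (v kq.2 p.1) * W kq.2 p.2 kq.1)
    -- `Ξ = σ²·blkdiag(W_1ᴴ·W_1, …, W_Qᴴ·W_Q)`
    (Ξ : Matrix (Fin K × Fin Q) (Fin K × Fin Q) ℂ)
    (hΞ : Ξ = Matrix.blockDiagonal fun q => ((σ : ℂ) ^ 2) • ((W q)ᴴ * W q)) :
    (1 + Ξ⁻¹ * Xᴴ * Sgm * X).det =
      (1 + (((σ : ℂ) ^ 2)⁻¹) •
        ((∑ q : Fin Q,
            (Matrix.vecMulVec (fun i => star (v q i)) (v q)) ⊗ₖ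
              (W q * ((W q)ᴴ * W q)⁻¹ * (W q)ᴴ)) * Sgm)).det :=
  stmt_2_general N_R N_T K Q σ Sgm v W hW X hX Ξ hΞ
end

section
/- Let N_R, N_T, K, Q be positive integers, σ > 0 a real number, and Σ an (N_T·N_R)×(N_T·N_R) complex matrix. For each q = 1,…,Q let v_q ∈ ℂ^{N_T}, let W_q be a complex N_R×K matrix with W_qᴴ·W_q invertible, and let Π_q be a complex N_R×K matrix with Π_qᴴ·Π_q = I_K and Π_q·Π_qᴴ = W_q·(W_qᴴ·W_q)⁻¹·W_qᴴ. Let X = [v_1^* ⊗ W_1, …, v_Q^* ⊗ W_Q], Ξ = σ²·blkdiag(W_1ᴴ·W_1, …, W_Qᴴ·W_Q), and X_Π = [v_1^* ⊗ Π_1, …, v_Q^* ⊗ Π_Q]. Then det(I_{KQ} + Ξ⁻¹·Xᴴ·Σ·X) = det(I_{KQ} + σ⁻²·X_Πᴴ·Σ·X_Π). Hence replacing each combiner W_q by an orthonormal-column matrix Π_q with the same column space leaves the mutual-information objective unchanged, so the orthogonality constraints W_qᴴ·W_q = I_K do not affect the optimal value of the mutual information. -/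
/-!
Write `R_q = Π_qᴴ W_q`. Since `Π_q Π_qᴴ` is the orthogonal projector onto the column space of `W_q`,
`Π_q R_q = W_q`, hence `X = X_Π D` with `D = blkdiag(R_1, …, R_Q)`, and `R_qᴴ R_q = W_qᴴ W_q`, hence
`Ξ = σ² Dᴴ D` with `D` invertible. Then `Ξ⁻¹ Xᴴ Σ X = σ⁻² D⁻¹ (X_Πᴴ Σ X_Π) D` is similar to
`σ⁻² X_Πᴴ Σ X_Π`, and similar matrices give the same determinant.
-/

open Matrix

namespace Matrix

variable {l m n ι α K : Type*}

theorem inv_smul_of_isUnit_det [Fintype n] [DecidableEq n] [Field K] (c : K)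
    {A : Matrix n n K} (hA : IsUnit A.det) : (c • A)⁻¹ = c⁻¹ • A⁻¹ := by
  rcases eq_or_ne c 0 with rfl | hc
  · simp
  · exact inv_smul' _ (Units.mk0 c hc) hA

theorem mul_inv_conjTranspose_mul_self_mul_conjTranspose_mul [Fintype m] [Fintype n]
    [DecidableEq n] [CommRing α] [StarRing α] {W : Matrix m n α} (hW : IsUnit (Wᴴ * W)) :
    W * (Wᴴ * W)⁻¹ * Wᴴ * W = W := by
  rw [Matrix.mul_assoc, Matrix.mul_assoc, nonsing_inv_mul _ ((isUnit_iff_isUnit_det _).mp hW),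
    Matrix.mul_one]

theorem isUnit_det_of_isUnit_det_conjTranspose_mul_self [Fintype n] [DecidableEq n]
    [CommRing α] [StarRing α] {R : Matrix n n α} (h : IsUnit (Rᴴ * R).det) : IsUnit R.det := by
  rw [det_mul] at h
  exact (IsUnit.mul_iff.mp h).2

/-- The block matrix `[u_1 ⊗ P_1, …, u_Q ⊗ P_Q]`, with columns indexed by `(k, q)`. -/
def kroneckerConcat [Mul α] (u : ι → l → α) (P : ι → Matrix m n α) :
    Matrix (l × m) (n × ι) α :=
  of fun i kq => u kq.2 i.1 * P kq.2 i.2 kq.1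

theorem kroneckerConcat_mul_blockDiagonal {p : Type*} [Fintype n] [Fintype ι] [DecidableEq ι]
    [NonUnitalSemiring α] (u : ι → l → α) (P : ι → Matrix m n α) (R : ι → Matrix n p α) :
    kroneckerConcat u P * blockDiagonal R = kroneckerConcat u fun q => P q * R q := by
  ext i ⟨k, q⟩
  simp [kroneckerConcat, mul_apply, blockDiagonal_apply, Fintype.sum_prod_type, Finset.mul_sum,
    mul_assoc]

theorem det_one_add_inv_smul_conjTranspose_mul_self_mul [Fintype m] [Fintype n] [DecidableEq n]
    [Field K] [StarRing K] (c : K) {D : Matrix n n K} (hD : IsUnit D.det) (Y : Matrix m n K)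
    (S : Matrix m m K) :
    (1 + (c • (Dᴴ * D))⁻¹ * (Y * D)ᴴ * S * (Y * D)).det = (1 + c⁻¹ • (Yᴴ * S * Y)).det := by
  have hDH : IsUnit Dᴴ.det := by rw [det_conjTranspose]; exact hD.star
  have hsimilar : 1 + (c • (Dᴴ * D))⁻¹ * (Y * D)ᴴ * S * (Y * D)
      = D⁻¹ * (1 + c⁻¹ • (Yᴴ * S * Y)) * D := by
    rw [inv_smul_of_isUnit_det c (by rw [det_mul]; exact hDH.mul hD), mul_inv_rev,
      conjTranspose_mul]
    simp only [Matrix.mul_add, Matrix.add_mul, Matrix.mul_one, nonsing_inv_mul _ hD,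
      Matrix.smul_mul, Matrix.mul_smul, Matrix.mul_assoc, nonsing_inv_mul_cancel_left _ _ hDH]
  rw [hsimilar, det_conj' ((isUnit_iff_isUnit_det _).mpr hD)]

end Matrix

theorem stmt_3_general (N_R N_T K Q : ℕ) (σ : ℝ)
    (Sgm : Matrix (Fin N_T × Fin N_R) (Fin N_T × Fin N_R) ℂ)
    (v : Fin Q → Fin N_T → ℂ)
    (W : Fin Q → Matrix (Fin N_R) (Fin K) ℂ)
    (hW : ∀ q, IsUnit ((W q)ᴴ * W q))
    (Pmat : Fin Q → Matrix (Fin N_R) (Fin K) ℂ)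
    (hP2 : ∀ q, Pmat q * (Pmat q)ᴴ = W q * ((W q)ᴴ * W q)⁻¹ * (W q)ᴴ)
    -- `X = [v_1^* ⊗ W_1, …, v_Q^* ⊗ W_Q]`
    (X : Matrix (Fin N_T × Fin N_R) (Fin K × Fin Q) ℂ)
    (hX : X = Matrix.of fun p kq => star (v kq.2 p.1) * W kq.2 p.2 kq.1)
    -- `Ξ = σ²·blkdiag(W_1ᴴ·W_1, …, W_Qᴴ·W_Q)`
    (Ξ : Matrix (Fin K × Fin Q) (Fin K × Fin Q) ℂ)
    (hΞ : Ξ = Matrix.blockDiagonal fun q => ((σ : ℂ) ^ 2) • ((W q)ᴴ * W q))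
    -- `X_Π = [v_1^* ⊗ Π_1, …, v_Q^* ⊗ Π_Q]`
    (XP : Matrix (Fin N_T × Fin N_R) (Fin K × Fin Q) ℂ)
    (hXP : XP = Matrix.of fun p kq => star (v kq.2 p.1) * Pmat kq.2 p.2 kq.1) :
    (1 + Ξ⁻¹ * Xᴴ * Sgm * X).det =
      (1 + (((σ : ℂ) ^ 2)⁻¹) • (XPᴴ * Sgm * XP)).det := by
  set R := fun q => (Pmat q)ᴴ * W q
  have hPR : ∀ q, Pmat q * R q = W q := fun q => by
    rw [← Matrix.mul_assoc, hP2 q, mul_inv_conjTranspose_mul_self_mul_conjTranspose_mul (hW q)]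
  have hRR : ∀ q, (R q)ᴴ * R q = (W q)ᴴ * W q := fun q => by
    rw [conjTranspose_mul, conjTranspose_conjTranspose, Matrix.mul_assoc, hPR q]
  have hXD : X = XP * blockDiagonal R := by
    have h := kroneckerConcat_mul_blockDiagonal (fun q i => star (v q i)) Pmat R
    simp only [hPR] at h
    rw [hX, hXP]
    exact h.symm
  have hΞD : Ξ = ((σ : ℂ) ^ 2) • ((blockDiagonal R)ᴴ * blockDiagonal R) := by
    rw [hΞ, blockDiagonal_conjTranspose, ← blockDiagonal_mul, ← blockDiagonal_smul]
    simp only [hRR]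
    rfl
  have hD : IsUnit (blockDiagonal R).det := by
    rw [det_blockDiagonal]
    exact IsUnit.prod_univ_iff.mpr fun q => isUnit_det_of_isUnit_det_conjTranspose_mul_self
      (by rw [hRR q]; exact (isUnit_iff_isUnit_det _).mp (hW q))
  rw [hΞD, hXD]
  exact det_one_add_inv_smul_conjTranspose_mul_self_mul _ hD XP Sgm

/-- Replacing each combiner `W_q` by an orthonormal-column matrix `Π_q`
with the same column-space projector leaves the mutual-information objective unchanged:
`det(I + Ξ⁻¹·Xᴴ·Σ·X) = det(I + σ⁻²·X_Πᴴ·Σ·X_Π)`. -/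
theorem stmt_3 (N_R N_T K Q : ℕ) (hNR : 0 < N_R) (hNT : 0 < N_T)
    (hK : 0 < K) (hQ : 0 < Q) (σ : ℝ) (hσ : 0 < σ)
    (Sgm : Matrix (Fin N_T × Fin N_R) (Fin N_T × Fin N_R) ℂ)
    (v : Fin Q → Fin N_T → ℂ)
    (W : Fin Q → Matrix (Fin N_R) (Fin K) ℂ)
    (hW : ∀ q, IsUnit ((W q)ᴴ * W q))
    (Pmat : Fin Q → Matrix (Fin N_R) (Fin K) ℂ)
    (hP1 : ∀ q, (Pmat q)ᴴ * Pmat q = 1)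
    (hP2 : ∀ q, Pmat q * (Pmat q)ᴴ = W q * ((W q)ᴴ * W q)⁻¹ * (W q)ᴴ)
    -- `X = [v_1^* ⊗ W_1, …, v_Q^* ⊗ W_Q]`
    (X : Matrix (Fin N_T × Fin N_R) (Fin K × Fin Q) ℂ)
    (hX : X = Matrix.of fun p kq => star (v kq.2 p.1) * W kq.2 p.2 kq.1)
    -- `Ξ = σ²·blkdiag(W_1ᴴ·W_1, …, W_Qᴴ·W_Q)`
    (Ξ : Matrix (Fin K × Fin Q) (Fin K × Fin Q) ℂ)
    (hΞ : Ξ = Matrix.blockDiagonal fun q => ((σ : ℂ) ^ 2) • ((W q)ᴴ * W q))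
    -- `X_Π = [v_1^* ⊗ Π_1, …, v_Q^* ⊗ Π_Q]`
    (XP : Matrix (Fin N_T × Fin N_R) (Fin K × Fin Q) ℂ)
    (hXP : XP = Matrix.of fun p kq => star (v kq.2 p.1) * Pmat kq.2 p.2 kq.1) :
    (1 + Ξ⁻¹ * Xᴴ * Sgm * X).det =
      (1 + (((σ : ℂ) ^ 2)⁻¹) • (XPᴴ * Sgm * XP)).det :=
  stmt_3_general N_R N_T K Q σ Sgm v W hW Pmat hP2 X hX Ξ hΞ XP hXP
end

section
/- Let N ≥ K be positive integers, P > 0 and σ > 0 real numbers. Let Σ be an N×N complex Hermitian matrix with eigendecomposition Σ = U·D·Uᴴ, where U is unitary (Uᴴ·U = I_N) and D = diag(λ_1, …, λ_N) with all λ_n ≥ 0 real. Let X = √P · U(:,1:K), the √P-scaled matrix of the first K columns of U. Then the posterior covariance Σ' := Σ − Σ·X·(Xᴴ·Σ·X + σ²·I_K)⁻¹·Xᴴ·Σ satisfies Σ' = U · diag(λ_1σ²/(Pλ_1+σ²), …, λ_Kσ²/(Pλ_K+σ²), λ_{K+1}, …, λ_N) · Uᴴ. In particular, Σ' has the same eigenvectors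 as Σ, the first K eigenvalues are updated from λ_n to λ_nσ²/(Pλ_n+σ²), and the remaining eigenvalues are unchanged. -/
open Matrix

/-- For Hermitian `Σ = U·diag(λ)·Uᴴ` with `U` unitary, `λ ≥ 0`, and
`X = √P · U(:,1:K)`, the posterior covariance
`Σ' = Σ − Σ·X·(Xᴴ·Σ·X + σ²·I)⁻¹·Xᴴ·Σ` equals
`U·diag(λ₁σ²/(Pλ₁+σ²), …, λ_Kσ²/(Pλ_K+σ²), λ_{K+1}, …, λ_N)·Uᴴ`. -/
theorem stmt_4 (N K : ℕ) (hK : 0 < K) (hKN : K ≤ N)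
    (P σ : ℝ) (hP : 0 < P) (hσ : 0 < σ)
    (Sgm U : Matrix (Fin N) (Fin N) ℂ)
    (ev : Fin N → ℝ) (hev : ∀ n, 0 ≤ ev n)
    (hSgmHerm : Sgm.IsHermitian)
    (hU : Uᴴ * U = 1)
    (hSgm : Sgm = U * Matrix.diagonal (fun n => (ev n : ℂ)) * Uᴴ)
    (X : Matrix (Fin N) (Fin K) ℂ)
    (hX : X = Matrix.of fun i k => (Real.sqrt P : ℂ) * U i (Fin.castLE hKN k)) :
    Sgm - Sgm * X * (Xᴴ * Sgm * X + ((σ : ℂ) ^ 2) • 1)⁻¹ * Xᴴ * Sgm =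
      U * Matrix.diagonal (fun (n : Fin N) =>
        if n.val < K then ((ev n * σ ^ 2 / (P * ev n + σ ^ 2) : ℝ) : ℂ)
        else ((ev n : ℝ) : ℂ)) * Uᴴ := by
  set D : Matrix (Fin N) (Fin N) ℂ := Matrix.diagonal (fun n => (ev n : ℂ)) with hD
  set E : Matrix (Fin N) (Fin K) ℂ :=
    Matrix.of (fun i k => if i = Fin.castLE hKN k then (1:ℂ) else 0) with hE
  set sP : ℂ := (Real.sqrt P : ℂ) with hsP
  have hsP2 : sP * sP = (P : ℂ) := by
    rw [hsP]; norm_cast; exact Real.mul_self_sqrt hP.le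
  have hsPstar : star sP = sP := by rw [hsP]; exact Complex.conj_ofReal _
  have hXE : X = sP • (U * E) := by
    ext i k
    simp [hX, hE, Matrix.mul_apply, mul_ite, Finset.sum_ite_eq]
  have hU' : ∀ M : Matrix (Fin N) (Fin K) ℂ, Uᴴ * (U * M) = M := by
    intro M; rw [← Matrix.mul_assoc, hU, Matrix.one_mul]
  have hU'' : ∀ M : Matrix (Fin N) (Fin N) ℂ, Uᴴ * (U * M) = M := by
    intro M; rw [← Matrix.mul_assoc, hU, Matrix.one_mul]
  have h1 : ∀ v : Fin N → ℂ, Eᴴ * (Matrix.diagonal v * E) =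
      Matrix.diagonal (fun k => v (Fin.castLE hKN k)) := by
    intro v
    ext k l
    simp only [Matrix.mul_apply, Matrix.diagonal_apply, hE, Matrix.conjTranspose_apply,
      Matrix.of_apply, apply_ite (star : ℂ → ℂ), star_one, star_zero, ite_mul, mul_ite,
      mul_one, mul_zero, one_mul, zero_mul, Finset.sum_ite_eq, Finset.sum_ite_eq',
      Finset.mem_univ, if_true, Fin.castLE_inj]
    rcases eq_or_ne k l with h | h
    · subst h; simp
    · simp [h, Ne.symm h]
  have h2 : ∀ w : Fin K → ℂ, E * (Matrix.diagonal w * Eᴴ) =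
      Matrix.diagonal (fun n : Fin N => if h : (n : ℕ) < K then w ⟨n, h⟩ else 0) := by
    intro w
    ext i j
    simp only [hE, Matrix.mul_apply, Matrix.diagonal_apply, Matrix.conjTranspose_apply,
      Matrix.of_apply, apply_ite (star : ℂ → ℂ), star_one, star_zero, ite_mul, mul_ite,
      mul_one, mul_zero, one_mul, zero_mul]
    by_cases hi : (i : ℕ) < K
    · set k0 : Fin K := ⟨(i : ℕ), hi⟩ with hk0
      have hik : Fin.castLE hKN k0 = i := rfl
      rw [Finset.sum_eq_single k0 (fun b _ hb => by
          rw [if_neg]; intro h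
          exact hb (Fin.ext ((congrArg Fin.val h).symm : (b : ℕ) = (k0 : ℕ))))
        (by simp)]
      rw [if_pos hik.symm,
        Finset.sum_eq_single k0 (fun b _ hb => by simp [Ne.symm hb]) (by simp)]
      rw [if_pos rfl]
      by_cases h : i = j
      · subst h; rw [if_pos hik.symm, if_pos rfl, dif_pos hi]
      · rw [if_neg (fun hh => h ((hh.trans hik).symm)), if_neg h]
    · have hne : ∀ x : Fin K, ¬ (i = Fin.castLE hKN x) := fun x h => hi (by rw [h]; exact x.isLt)
      simp only [hne, if_false, Finset.sum_const_zero, dif_neg hi, ite_self]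
  -- the middle matrix is diagonal
  have hgpos : ∀ n : Fin N, (0:ℝ) < P * ev n + σ ^ 2 := by
    intro n; have := hev n; positivity
  have hgne : ∀ n : Fin N, ((P * ev n + σ ^ 2 : ℝ) : ℂ) ≠ 0 := by
    intro n; exact_mod_cast (hgpos n).ne'
  have hM : Xᴴ * Sgm * X + ((σ : ℂ) ^ 2) • 1 =
      Matrix.diagonal (fun k => ((P * ev (Fin.castLE hKN k) + σ ^ 2 : ℝ) : ℂ)) := by
    rw [hXE, hSgm]
    rw [Matrix.conjTranspose_smul, Matrix.conjTranspose_mul, hsPstar]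
    have h3 : (sP • (Eᴴ * Uᴴ)) * (U * D * Uᴴ) * (sP • (U * E))
        = (sP * sP) • (Eᴴ * (D * E)) := by
      simp only [Matrix.smul_mul, Matrix.mul_smul, smul_smul, Matrix.mul_assoc, hU', hU'']
    rw [h3, hsP2, h1]
    ext k l
    by_cases h : k = l <;>
      simp [h, Matrix.diagonal_apply, Matrix.one_apply] <;> push_cast <;> ring
  have hMinv : (Xᴴ * Sgm * X + ((σ : ℂ) ^ 2) • 1)⁻¹ =
      Matrix.diagonal (fun k => (((P * ev (Fin.castLE hKN k) + σ ^ 2 : ℝ) : ℂ))⁻¹) := by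
    apply Matrix.inv_eq_right_inv
    rw [hM, Matrix.diagonal_mul_diagonal]
    have hone : (fun k : Fin K => ((P * ev (Fin.castLE hKN k) + σ ^ 2 : ℝ) : ℂ) *
        (((P * ev (Fin.castLE hKN k) + σ ^ 2 : ℝ) : ℂ))⁻¹) = fun _ => (1 : ℂ) :=
      funext fun k => mul_inv_cancel₀ (hgne _)
    rw [hone, Matrix.diagonal_one]
  set winv : Fin K → ℂ := fun k => (((P * ev (Fin.castLE hKN k) + σ ^ 2 : ℝ) : ℂ))⁻¹ with hwinv
  set G : Fin N → ℂ := fun n => if h : (n : ℕ) < K then winv ⟨n, h⟩ else 0 with hG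
  have hsub : Sgm * X * (Xᴴ * Sgm * X + ((σ : ℂ) ^ 2) • 1)⁻¹ * Xᴴ * Sgm =
      (P : ℂ) • (U * (Matrix.diagonal (fun n => (ev n : ℂ) * (G n * (ev n : ℂ))) * Uᴴ)) := by
    rw [hMinv, hXE, hSgm, Matrix.conjTranspose_smul, Matrix.conjTranspose_mul, hsPstar]
    have h4 : U * D * Uᴴ * (sP • (U * E)) * Matrix.diagonal winv * (sP • (Eᴴ * Uᴴ)) *
        (U * D * Uᴴ) = (sP * sP) •
          (U * (D * (E * (Matrix.diagonal winv * (Eᴴ * (D * Uᴴ)))))) := by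
      simp only [Matrix.smul_mul, Matrix.mul_smul, smul_smul, Matrix.mul_assoc, hU', hU'']
    rw [h4, hsP2]
    have h5 : E * (Matrix.diagonal winv * (Eᴴ * (D * Uᴴ))) =
        Matrix.diagonal G * (D * Uᴴ) := by
      rw [← Matrix.mul_assoc (Matrix.diagonal winv), ← Matrix.mul_assoc E, h2]
    rw [h5]
    have h6 : D * (Matrix.diagonal G * (D * Uᴴ)) =
        Matrix.diagonal (fun n => (ev n : ℂ) * (G n * (ev n : ℂ))) * Uᴴ := by
      rw [hD, ← Matrix.mul_assoc (Matrix.diagonal G), Matrix.diagonal_mul_diagonal,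
        ← Matrix.mul_assoc, Matrix.diagonal_mul_diagonal]
    rw [h6]
  rw [hsub, hSgm]
  have h7 : (P : ℂ) • (U * (Matrix.diagonal (fun n => (ev n : ℂ) * (G n * (ev n : ℂ))) * Uᴴ)) =
      U * Matrix.diagonal (fun n => (P : ℂ) * ((ev n : ℂ) * (G n * (ev n : ℂ)))) * Uᴴ := by
    rw [← Matrix.mul_assoc, ← Matrix.smul_mul, ← Matrix.mul_smul, ← Matrix.diagonal_smul]
    first
    | rfl
    | (congr 2
       funext n
       simp)
  rw [h7, Matrix.mul_assoc, Matrix.mul_assoc, Matrix.mul_assoc, ← Matrix.mul_sub, ← Matrix.sub_mul]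
  congr 2
  rw [hD, Matrix.diagonal_sub]
  refine congrArg Matrix.diagonal (funext fun n => ?_)
  by_cases h : (n : ℕ) < K
  · have hcast : Fin.castLE hKN ⟨(n : ℕ), h⟩ = n := rfl
    rw [if_pos h, hG]
    simp only [dif_pos h, hwinv, hcast]
    have h0 : ((P * ev n + σ ^ 2 : ℝ) : ℂ) = (P : ℂ) * (ev n : ℂ) + (σ : ℂ) ^ 2 := by
      push_cast; ring
    have hne : ((P : ℂ) * (ev n : ℂ) + (σ : ℂ) ^ 2) ≠ 0 := h0 ▸ hgne n
    have hne' : ((ev n : ℂ) * (P : ℂ) + (σ : ℂ) ^ 2) ≠ 0 := by rwa [mul_comm]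
    push_cast
    field_simp
    ring
  · rw [if_neg h, hG]
    simp [dif_neg h]
end

section
/- Let Σ be an N×N complex Hermitian positive semidefinite matrix, X̄ an N×m complex matrix, X an N×k complex matrix, and σ > 0 a real number. Let [X̄, X] denote the N×(m+k) horizontal concatenation and define the posterior covariance Σ' := Σ − Σ·X̄·(X̄ᴴ·Σ·X̄ + σ²·I_m)⁻¹·X̄ᴴ·Σ. Then det(I_{m+k} + σ⁻²·[X̄, X]ᴴ·Σ·[X̄, X]) = det(I_m + σ⁻²·X̄ᴴ·Σ·X̄) · det(I_k + σ⁻²·Xᴴ·Σ'·X). Consequently, the mutual information increment from adding the observation block X to X̄ equals log₂ det(I_k + σ⁻²·Xᴴ·Σ'·X). -/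
open Matrix
open scoped ComplexOrder

/-- For Hermitian PSD `Σ`, matrices `X̄, X`, and `σ > 0`, with posterior
covariance `Σ' = Σ − Σ·X̄·(X̄ᴴ·Σ·X̄ + σ²·I)⁻¹·X̄ᴴ·Σ`, one has
`det(I + σ⁻²·[X̄,X]ᴴ·Σ·[X̄,X]) = det(I + σ⁻²·X̄ᴴ·Σ·X̄) · det(I + σ⁻²·Xᴴ·Σ'·X)`. -/
theorem stmt_8 (N m k : ℕ) (σ : ℝ) (hσ : 0 < σ)
    (Sgm : Matrix (Fin N) (Fin N) ℂ) (hSgm : Sgm.PosSemidef)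
    (Xb : Matrix (Fin N) (Fin m) ℂ) (X : Matrix (Fin N) (Fin k) ℂ)
    (Sgm' : Matrix (Fin N) (Fin N) ℂ)
    (hSgm' : Sgm' = Sgm - Sgm * Xb * (Xbᴴ * Sgm * Xb + ((σ : ℂ) ^ 2) • 1)⁻¹ * Xbᴴ * Sgm) :
    (1 + (((σ : ℂ) ^ 2)⁻¹) •
        ((Matrix.fromCols Xb X)ᴴ * Sgm * Matrix.fromCols Xb X)).det =
      (1 + (((σ : ℂ) ^ 2)⁻¹) • (Xbᴴ * Sgm * Xb)).det *
        (1 + (((σ : ℂ) ^ 2)⁻¹) • (Xᴴ * Sgm' * X)).det := by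
  have hσ2pos : (0 : ℂ) < (σ : ℂ) ^ 2 := by
    have : (0 : ℂ) < (σ : ℂ) := by exact_mod_cast hσ
    positivity
  have hσ2 : ((σ : ℂ) ^ 2) ≠ 0 := hσ2pos.ne'
  set c : ℂ := ((σ : ℂ) ^ 2)⁻¹ with hc_def
  have hc : c ≠ 0 := inv_ne_zero hσ2
  set A : Matrix (Fin m) (Fin m) ℂ := Xbᴴ * Sgm * Xb + ((σ : ℂ) ^ 2) • 1 with hA_def
  have hApd : A.PosDef := by
    refine Matrix.PosDef.posSemidef_add (hSgm.conjTranspose_mul_mul_same Xb) ?_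
    rw [smul_one_eq_diagonal]
    exact posDef_diagonal_iff.mpr fun i => hσ2pos
  have hAunit : IsUnit A.det := hApd.det_pos.ne'.isUnit
  -- top-left block equals c • A
  have hT : (1 : Matrix (Fin m) (Fin m) ℂ) + c • (Xbᴴ * Sgm * Xb) = c • A := by
    rw [hA_def, smul_add, smul_smul, inv_mul_cancel₀ hσ2, one_smul, add_comm]
  -- block decomposition
  have key : (Matrix.fromCols Xb X)ᴴ * Sgm * Matrix.fromCols Xb X =
      fromBlocks (Xbᴴ * Sgm * Xb) (Xbᴴ * Sgm * X) (Xᴴ * Sgm * Xb) (Xᴴ * Sgm * X) := by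
    rw [conjTranspose_fromCols_eq_fromRows_conjTranspose, fromRows_mul,
      fromRows_mul_fromCols]
  have hblock : (1 : Matrix (Fin m ⊕ Fin k) (Fin m ⊕ Fin k) ℂ) +
      c • fromBlocks (Xbᴴ * Sgm * Xb) (Xbᴴ * Sgm * X) (Xᴴ * Sgm * Xb) (Xᴴ * Sgm * X) =
      fromBlocks (1 + c • (Xbᴴ * Sgm * Xb)) (c • (Xbᴴ * Sgm * X))
        (c • (Xᴴ * Sgm * Xb)) (1 + c • (Xᴴ * Sgm * X)) := by
    rw [← fromBlocks_one, fromBlocks_smul, fromBlocks_add, zero_add, zero_add]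
  haveI : Invertible ((1 : Matrix (Fin m) (Fin m) ℂ) + c • (Xbᴴ * Sgm * Xb)) := by
    apply Matrix.invertibleOfIsUnitDet
    rw [hT, det_smul]
    exact (hc.isUnit.pow _).mul hAunit
  rw [key, hblock, det_fromBlocks₁₁]
  congr 1
  -- Schur complement equals 1 + c • Xᴴ Σ' X
  have hinv : ⅟((1 : Matrix (Fin m) (Fin m) ℂ) + c • (Xbᴴ * Sgm * Xb)) = c⁻¹ • A⁻¹ := by
    rw [invOf_eq_nonsing_inv, hT]
    refine Matrix.inv_eq_left_inv ?_
    rw [Matrix.smul_mul, Matrix.mul_smul, smul_smul, inv_mul_cancel₀ hc, one_smul,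
      Matrix.nonsing_inv_mul A hAunit]
  have hsgm'eq : Xᴴ * Sgm' * X =
      Xᴴ * Sgm * X - Xᴴ * Sgm * Xb * A⁻¹ * (Xbᴴ * Sgm * X) := by
    rw [hSgm']
    simp only [Matrix.sub_mul, Matrix.mul_sub, Matrix.mul_assoc]
  have hprod : (c • (Xᴴ * Sgm * Xb)) * (c⁻¹ • A⁻¹) * (c • (Xbᴴ * Sgm * X)) =
      c • (Xᴴ * Sgm * Xb * A⁻¹ * (Xbᴴ * Sgm * X)) := by
    simp only [Matrix.smul_mul, Matrix.mul_smul, smul_smul]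
    congr 1
    field_simp
  rw [hinv, hsgm'eq, smul_sub, ← add_sub_assoc, hprod]
end

section
/- Let Σ be an N×N complex Hermitian positive semidefinite matrix, A an N×m complex matrix, B an N×k complex matrix, and σ > 0 a real number. Define Post(Σ, M, σ²) := Σ − Σ·M·(Mᴴ·Σ·M + σ²·I)⁻¹·Mᴴ·Σ for any matrix M with N rows. Then the posterior covariance satisfies the recursion Post(Σ, [A, B], σ²) = Post(Post(Σ, A, σ²), B, σ²); that is, updating on the concatenated observation matrix [A, B] in one step equals first updating on A and then updating the resulting posterior covariance on B. -/
open Matrix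
open scoped ComplexOrder

/-- The posterior covariance update
`Post(Σ, M, σ²) = Σ − Σ·M·(Mᴴ·Σ·M + σ²·I)⁻¹·Mᴴ·Σ`. -/
noncomputable def post {n m : Type*} [Fintype n] [Fintype m] [DecidableEq m]
    (S : Matrix n n ℂ) (M : Matrix n m ℂ) (σ2 : ℂ) : Matrix n n ℂ :=
  S - S * M * (Mᴴ * S * M + σ2 • 1)⁻¹ * Mᴴ * S

set_option maxHeartbeats 1000000 in
/-- For Hermitian PSD `Σ` and `σ > 0`, the posterior covariance
satisfies the recursion `Post(Σ, [A, B], σ²) = Post(Post(Σ, A, σ²), B, σ²)`. -/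
theorem stmt_9 (N m k : ℕ) (σ : ℝ) (hσ : 0 < σ)
    (Sgm : Matrix (Fin N) (Fin N) ℂ) (hSgm : Sgm.PosSemidef)
    (A : Matrix (Fin N) (Fin m) ℂ) (B : Matrix (Fin N) (Fin k) ℂ) :
    post Sgm (Matrix.fromCols A B) ((σ : ℂ) ^ 2) =
      post (post Sgm A ((σ : ℂ) ^ 2)) B ((σ : ℂ) ^ 2) := by
  simp only [post]
  set s : ℂ := (σ : ℂ) ^ 2 with hsdef
  have hs : (0 : ℂ) < s := by
    have h1 : s = ((σ ^ 2 : ℝ) : ℂ) := by push_cast; ring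
    rw [h1]
    exact Complex.zero_lt_real.mpr (by positivity)
  have hSH : Sgmᴴ = Sgm := hSgm.isHermitian
  set P : Matrix (Fin m) (Fin m) ℂ := Aᴴ * Sgm * A + s • 1 with hPdef
  set R : Matrix (Fin m) (Fin k) ℂ := Aᴴ * Sgm * B with hRdef
  have hRH : Rᴴ = Bᴴ * Sgm * A := by
    rw [hRdef]
    simp [conjTranspose_mul, hSH, Matrix.mul_assoc]
  -- s • 1 is positive definite
  have hs1m : (s • (1 : Matrix (Fin m) (Fin m) ℂ)).PosDef := by
    rw [smul_one_eq_diagonal]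
    exact Matrix.posDef_diagonal_iff.mpr fun _ => hs
  have hs1k : (s • (1 : Matrix (Fin k) (Fin k) ℂ)).PosDef := by
    rw [smul_one_eq_diagonal]
    exact Matrix.posDef_diagonal_iff.mpr fun _ => hs
  have hP : P.PosDef :=
    Matrix.PosDef.posSemidef_add (hSgm.conjTranspose_mul_mul_same A) hs1m
  haveI : Invertible P := hP.isUnit.invertible
  have hPH : P⁻¹ᴴ = P⁻¹ := hP.isHermitian.inv
  have hPdet : IsUnit P.det := hP.det_pos.ne'.isUnit
  have hPP : P * P⁻¹ = 1 := Matrix.mul_nonsing_inv _ hPdet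
  set S1 : Matrix (Fin N) (Fin N) ℂ := Sgm - Sgm * A * P⁻¹ * Aᴴ * Sgm with hS1def
  set Q : Matrix (Fin k) (Fin k) ℂ := Bᴴ * S1 * B + s • 1 with hQdef
  have hBS1B : Bᴴ * S1 * B = Bᴴ * Sgm * B - Rᴴ * P⁻¹ * R := by
    rw [hS1def, hRH, hRdef]
    simp [Matrix.mul_sub, Matrix.sub_mul, Matrix.mul_assoc]
  -- the block matrix ⟨s•1, 0; 0, 0⟩ is PSD
  have hpsd0 : (fromBlocks (s • (1 : Matrix (Fin m) (Fin m) ℂ))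
      (0 : Matrix (Fin m) (Fin k) ℂ) (0 : Matrix (Fin k) (Fin m) ℂ)
      (0 : Matrix (Fin k) (Fin k) ℂ)).PosSemidef := by
    have h := hs1m.posSemidef.conjTranspose_mul_mul_same
      (fromCols (1 : Matrix (Fin m) (Fin m) ℂ) (0 : Matrix (Fin m) (Fin k) ℂ))
    rw [conjTranspose_fromCols_eq_fromRows_conjTranspose, fromRows_mul,
      fromRows_mul_fromCols] at h
    simpa using h
  have hMM : (fromBlocks P R Rᴴ (Bᴴ * Sgm * B)).PosSemidef := by
    have h1 : ((fromCols A B)ᴴ * Sgm * fromCols A B).PosSemidef :=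
      hSgm.conjTranspose_mul_mul_same _
    rw [conjTranspose_fromCols_eq_fromRows_conjTranspose, fromRows_mul,
      fromRows_mul_fromCols] at h1
    have h2 := h1.add hpsd0
    rw [fromBlocks_add] at h2
    simpa [hRH, ← hPdef, ← hRdef] using h2
  have hSchur : (Bᴴ * Sgm * B - Rᴴ * P⁻¹ * R).PosSemidef :=
    (Matrix.PosDef.fromBlocks₁₁ R (Bᴴ * Sgm * B) hP).mp hMM
  have hQ : Q.PosDef := by
    rw [hQdef, hBS1B]
    exact Matrix.PosDef.posSemidef_add hSchur hs1k
  have hQdet : IsUnit Q.det := hQ.det_pos.ne'.isUnit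
  have hQQ : Q * Q⁻¹ = 1 := Matrix.mul_nonsing_inv _ hQdet
  -- the big matrix is a block matrix
  have hK : (fromCols A B)ᴴ * Sgm * fromCols A B + s • 1
      = fromBlocks P R Rᴴ (Q + Rᴴ * P⁻¹ * R) := by
    rw [conjTranspose_fromCols_eq_fromRows_conjTranspose, fromRows_mul,
      fromRows_mul_fromCols, ← fromBlocks_one, fromBlocks_smul, fromBlocks_add]
    rw [hQdef, hBS1B, fromBlocks_inj]
    refine ⟨rfl, by simp [hRdef], by simp [hRH], by abel⟩
  -- inverse of the block matrix
  have hKinv : (fromBlocks P R Rᴴ (Q + Rᴴ * P⁻¹ * R))⁻¹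
      = fromBlocks (P⁻¹ + P⁻¹ * R * Q⁻¹ * Rᴴ * P⁻¹) (-(P⁻¹ * R * Q⁻¹))
        (-(Q⁻¹ * Rᴴ * P⁻¹)) Q⁻¹ := by
    apply Matrix.inv_eq_right_inv
    rw [fromBlocks_multiply, ← fromBlocks_one, fromBlocks_inj]
    refine ⟨?_, ?_, ?_, ?_⟩ <;>
      simp only [Matrix.mul_add, Matrix.add_mul, Matrix.mul_neg, Matrix.neg_mul,
        ← Matrix.mul_assoc, hPP, hQQ, Matrix.one_mul] <;>
      abel
  rw [hK, hKinv]
  rw [show Sgm * fromCols A B = fromCols (Sgm * A) (Sgm * B) from mul_fromCols ..]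
  rw [fromCols_mul_fromBlocks, conjTranspose_fromCols_eq_fromRows_conjTranspose,
    fromCols_mul_fromRows]
  rw [hS1def, hRdef, hRH]
  simp only [Matrix.mul_add, Matrix.add_mul, Matrix.mul_sub, Matrix.sub_mul,
    Matrix.mul_neg, Matrix.neg_mul, Matrix.mul_assoc]
  abel
end

section
/- Let Σ be an N×N complex Hermitian positive semidefinite matrix with eigenvalues β_1 ≥ β_2 ≥ … ≥ β_N (listed with multiplicity in decreasing order), let c ≥ 0 be a real number, let K ≤ N, and let W be a complex N×K matrix with Wᴴ·W = I_K. Then det(I_K + c·Wᴴ·Σ·W) is a positive real number and satisfies det(I_K + c·Wᴴ·Σ·W) ≤ ∏_{n=1}^{K} (1 + c·β_n). Moreover, equality holds when the columns of W are orthonormal eigenvectors of Σ associated with the K largest eigenvalues β_1, …, β_K. -/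
open Matrix Finset Equiv
open scoped ComplexOrder

/-! With `V = Uᴴ W`, which again has orthonormal columns, `1 + c Wᴴ Σ W = Vᴴ diag(1 + c β) V`.
By Cauchy–Binet its determinant is `∑_S (∏_{n ∈ S} (1 + c β_n)) |det V_S|²`, summed over the
`K`-element row sets `S`. The weights `|det V_S|²` are nonnegative and sum to `det (Vᴴ V) = 1`, so
the determinant is a convex combination of the products, each of which lies between `1` and
`∏_{n < K} (1 + c β_n)`: the `j`-th smallest element of `S` is at least `j` and `β` decreases. -/

theorem Fin.castLE_le_of_strictMono {K N : ℕ} (hK : K ≤ N) {q : Fin K → Fin N}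
    (hq : StrictMono q) (j : Fin K) : Fin.castLE hK j ≤ q j := by
  have := Finset.card_le_card_of_injOn q (s := Iio j) (t := Iio (q j))
    (fun i hi => by simpa using hq (by simpa using hi)) hq.injective.injOn
  simpa [Fin.le_def] using this

namespace Tuple

variable {K : ℕ} {ι : Type*} [LinearOrder ι]

def strictMonoProdPermEquiv :
    {q : Fin K → ι // StrictMono q} × Perm (Fin K) ≃ {p : Fin K → ι // Function.Injective p} where
  toFun x := ⟨x.1.1 ∘ x.2, x.1.2.injective.comp x.2.injective⟩
  invFun p := (⟨p.1 ∘ sort p.1,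
    (monotone_sort p.1).strictMono_of_injective (p.2.comp (sort p.1).injective)⟩, (sort p.1)⁻¹)
  left_inv := by
    rintro ⟨⟨q, hq⟩, σ⟩
    have hsort : (q ∘ σ) ∘ sort (q ∘ σ) = q := by
      rw [← comp_sort_eq_comp_iff_monotone.mpr (show Monotone ((q ∘ σ) ∘ ⇑σ⁻¹) by
        simpa [Function.comp_assoc] using hq.monotone)]
      simp [Function.comp_assoc]
    refine Prod.ext (Subtype.ext hsort) (Equiv.ext fun i => hq.injective ?_)
    simpa using (congrFun hsort ((sort (q ∘ σ))⁻¹ i)).symm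
  right_inv p := Subtype.ext (by ext i; simp)

end Tuple

namespace Matrix

variable {R : Type*} [CommRing R]

theorem det_mul_eq_sum_prod_mul_det_submatrix {m ι : Type*} [Fintype m] [DecidableEq m]
    [Fintype ι] (A : Matrix m ι R) (B : Matrix ι m R) :
    (A * B).det = ∑ p : m → ι, (∏ i, A i (p i)) * (B.submatrix p id).det := by
  have hrows : (A * B).det = detRowAlternating fun i => ∑ n, A i n • B n := by
    congr 1
    ext i j
    simp [mul_apply, Finset.sum_apply]
  rw [hrows, ← AlternatingMap.coe_multilinearMap, MultilinearMap.map_sum]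
  refine Finset.sum_congr rfl fun p _ => ?_
  rw [AlternatingMap.coe_multilinearMap, AlternatingMap.map_smul_univ]
  rfl

/-- Cauchy–Binet: of the row selections `p` in the expansion above only the injective ones
contribute, and each of them is a strictly monotone selection followed by a permutation. -/
theorem det_mul_eq_sum_strictMono {K : ℕ} {ι : Type*} [Fintype ι] [LinearOrder ι]
    (A : Matrix (Fin K) ι R) (B : Matrix ι (Fin K) R) :
    (A * B).det = ∑ q : {q : Fin K → ι // StrictMono q},
      (A.submatrix id q.1).det * (B.submatrix q.1 id).det := by
  classical
  set F : (Fin K → ι) → R := fun p => (∏ i, A i (p i)) * (B.submatrix p id).det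
  have hF : ∀ p, ¬Function.Injective p → F p = 0 := fun p hp => by
    obtain ⟨i, j, hpij, hij⟩ : ∃ i j, p i = p j ∧ i ≠ j := by
      simpa [Function.Injective, and_comm] using hp
    simp only [F]
    rw [det_zero_of_row_eq hij (by ext; simp [hpij]), mul_zero]
  calc (A * B).det = ∑ p : {p : Fin K → ι // Function.Injective p}, F p.1 := by
        rw [det_mul_eq_sum_prod_mul_det_submatrix, ← Finset.sum_filter_of_ne fun p _ hp =>
          not_not.mp (mt (hF p) hp)]
        exact Finset.sum_subtype _ (by simp) F
    _ = ∑ x : {q : Fin K → ι // StrictMono q} × Perm (Fin K), F (x.1.1 ∘ x.2) :=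
        (Tuple.strictMonoProdPermEquiv.sum_comp fun p => F p.1).symm
    _ = _ := by
        rw [Fintype.sum_prod_type]
        refine Finset.sum_congr rfl fun q _ => ?_
        have hperm : ∀ σ : Perm (Fin K), F (q.1 ∘ σ) =
            (Perm.sign σ * ∏ i, A i (q.1 (σ i))) * (B.submatrix q.1 id).det := by
          intro σ
          have : B.submatrix (q.1 ∘ σ) id = (B.submatrix q.1 id).submatrix σ id := rfl
          simp only [F, Function.comp_apply, this, det_permute]
          ring
        have hA : (A.submatrix id q.1).det =
            ∑ σ : Perm (Fin K), Perm.sign σ * ∏ i, A i (q.1 (σ i)) := by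
          rw [← det_transpose, det_apply']
          rfl
        simp only [hperm, hA, Finset.sum_mul]

theorem one_add_smul_diagonal {n : Type*} [DecidableEq n] (c : R) (μ : n → R) :
    1 + c • diagonal μ = diagonal fun i => 1 + c * μ i := by
  rw [← diagonal_one, ← diagonal_smul, diagonal_add]
  rfl

theorem one_add_smul_conjTranspose_mul_mul [StarRing R] {n k : Type*} [Fintype n] [Fintype k]
    [DecidableEq n] [DecidableEq k] {X : Matrix n k R} (hX : Xᴴ * X = 1) (c : R)
    (S : Matrix n n R) : 1 + c • (Xᴴ * S * X) = Xᴴ * (1 + c • S) * X := by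
  rw [Matrix.mul_add, Matrix.add_mul, Matrix.mul_one, hX, Matrix.mul_smul, Matrix.smul_mul]

theorem conjTranspose_mul_mul_eq_diagonal [StarRing R] {n k : Type*} [Fintype n] [Fintype k]
    [DecidableEq k] {W : Matrix n k R} (hW : Wᴴ * W = 1) {S : Matrix n n R} {μ : k → R}
    (hS : ∀ j, S *ᵥ (fun i => W i j) = μ j • fun i => W i j) : Wᴴ * S * W = diagonal μ := by
  have hcols : S * W = W * diagonal μ := by
    ext i j
    rw [mul_diagonal, mul_apply, mul_comm]
    simpa [mulVec, dotProduct] using congrFun (hS j) i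
  rw [Matrix.mul_assoc, hcols, ← Matrix.mul_assoc, hW, Matrix.one_mul]

variable {K : ℕ} {ι : Type*} [Fintype ι] [LinearOrder ι]

theorem det_conjTranspose_mul_diagonal_mul (V : Matrix ι (Fin K) ℂ) (d : ι → ℝ) :
    (Vᴴ * diagonal (fun i => (d i : ℂ)) * V).det =
      ((∑ q : {q : Fin K → ι // StrictMono q},
        (∏ j, d (q.1 j)) * Complex.normSq (V.submatrix q.1 id).det : ℝ) : ℂ) := by
  rw [det_mul_eq_sum_strictMono]
  push_cast
  refine Finset.sum_congr rfl fun q _ => ?_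
  have hminor : (Vᴴ * diagonal fun i => (d i : ℂ)).submatrix id q.1 =
      (V.submatrix q.1 id)ᴴ * diagonal fun j => (d (q.1 j) : ℂ) := by
    ext i j
    simp [mul_diagonal]
  rw [hminor, det_mul, det_conjTranspose, det_diagonal, Complex.normSq_eq_conj_mul_self,
    Complex.star_def]
  ring

theorem sum_normSq_det_submatrix_eq_one {V : Matrix ι (Fin K) ℂ} (hV : Vᴴ * V = 1) :
    ∑ q : {q : Fin K → ι // StrictMono q}, Complex.normSq (V.submatrix q.1 id).det = 1 := by
  have h := det_conjTranspose_mul_diagonal_mul V fun _ => 1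
  simp only [Complex.ofReal_one, diagonal_one, Matrix.mul_one, hV, det_one, prod_const_one,
    one_mul] at h
  exact_mod_cast h.symm

variable {N : ℕ} {V : Matrix (Fin N) (Fin K) ℂ} {d : Fin N → ℝ}

theorem one_le_det_conjTranspose_mul_diagonal_mul (hV : Vᴴ * V = 1) (hd : ∀ n, 1 ≤ d n) :
    1 ≤ (Vᴴ * diagonal (fun n => (d n : ℂ)) * V).det := by
  rw [det_conjTranspose_mul_diagonal_mul, ← Complex.ofReal_one, Complex.real_le_real,
    ← sum_normSq_det_submatrix_eq_one hV]
  exact Finset.sum_le_sum fun q _ => le_mul_of_one_le_left (Complex.normSq_nonneg _)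
    (Finset.one_le_prod fun j _ => hd _)

theorem det_conjTranspose_mul_diagonal_mul_le_prod (hK : K ≤ N) (hV : Vᴴ * V = 1)
    (hd : Antitone d) (hd0 : ∀ n, 0 ≤ d n) :
    (Vᴴ * diagonal (fun n => (d n : ℂ)) * V).det ≤
      ((∏ j : Fin K, d (Fin.castLE hK j) : ℝ) : ℂ) := by
  rw [det_conjTranspose_mul_diagonal_mul, Complex.real_le_real]
  calc _ ≤ ∑ q : {q : Fin K → Fin N // StrictMono q},
        (∏ j, d (Fin.castLE hK j)) * Complex.normSq (V.submatrix q.1 id).det := by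
        refine Finset.sum_le_sum fun q _ =>
          mul_le_mul_of_nonneg_right ?_ (Complex.normSq_nonneg _)
        exact Finset.prod_le_prod (fun j _ => hd0 _) fun j _ =>
          hd (Fin.castLE_le_of_strictMono hK q.2 j)
    _ = ∏ j, d (Fin.castLE hK j) := by
        rw [← Finset.mul_sum, sum_normSq_det_submatrix_eq_one hV, mul_one]

end Matrix

/-- For Hermitian PSD `Σ = U·diag(β)·Uᴴ` with `U` unitary and
decreasing nonnegative eigenvalues `β`, `c ≥ 0`, `K ≤ N`, and any `W` with
orthonormal columns, `det(I_K + c·Wᴴ·Σ·W)` is a positive real number satisfying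
`det(I_K + c·Wᴴ·Σ·W) ≤ ∏_{n=1}^K (1 + c·β_n)`, with equality whenever the columns
of `W` are orthonormal eigenvectors of `Σ` for the `K` largest eigenvalues
`β_1, …, β_K`. (Positivity and the inequality are stated in the complex order, which
forces the determinant to be real.) -/
theorem stmt_12 (N K : ℕ) (hK : K ≤ N)
    (Sgm U : Matrix (Fin N) (Fin N) ℂ)
    (β : Fin N → ℝ) (hβdec : Antitone β) (hβ0 : ∀ n, 0 ≤ β n)
    (hU : Uᴴ * U = 1)
    (hSgm : Sgm = U * Matrix.diagonal (fun n => (β n : ℂ)) * Uᴴ)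
    (c : ℝ) (hc : 0 ≤ c)
    (W : Matrix (Fin N) (Fin K) ℂ) (hW : Wᴴ * W = 1) :
    (0 < (1 + (c : ℂ) • (Wᴴ * Sgm * W)).det ∧
      (1 + (c : ℂ) • (Wᴴ * Sgm * W)).det ≤
        ((∏ k : Fin K, (1 + c * β (Fin.castLE hK k)) : ℝ) : ℂ)) ∧
    ∀ W' : Matrix (Fin N) (Fin K) ℂ, W'ᴴ * W' = 1 →
      (∀ k : Fin K, Sgm *ᵥ (fun i => W' i k) =
        ((β (Fin.castLE hK k) : ℂ)) • fun i => W' i k) →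
      (1 + (c : ℂ) • (W'ᴴ * Sgm * W')).det =
        ((∏ k : Fin K, (1 + c * β (Fin.castLE hK k)) : ℝ) : ℂ) := by
  have hUH : Uᴴᴴ * Uᴴ = 1 := by rw [conjTranspose_conjTranspose, mul_eq_one_comm, hU]
  have hV : (Uᴴ * W)ᴴ * (Uᴴ * W) = 1 := by
    rw [conjTranspose_mul, Matrix.mul_assoc, ← Matrix.mul_assoc Uᴴᴴ, hUH, Matrix.one_mul, hW]
  have hSgm' : 1 + (c : ℂ) • Sgm = U * diagonal (fun n => 1 + c * (β n : ℂ)) * Uᴴ := by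
    have h := one_add_smul_conjTranspose_mul_mul hUH (c : ℂ) (diagonal fun n => (β n : ℂ))
    rwa [conjTranspose_conjTranspose, ← hSgm, one_add_smul_diagonal] at h
  have hdet : 1 + (c : ℂ) • (Wᴴ * Sgm * W) =
      (Uᴴ * W)ᴴ * diagonal (fun n => ((1 + c * β n : ℝ) : ℂ)) * (Uᴴ * W) := by
    rw [one_add_smul_conjTranspose_mul_mul hW, hSgm', conjTranspose_mul,
      conjTranspose_conjTranspose]
    push_cast
    simp only [Matrix.mul_assoc]
  have hone_le : ∀ n, 1 ≤ 1 + c * β n := fun n => le_add_of_nonneg_right (mul_nonneg hc (hβ0 n))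
  refine ⟨⟨?_, ?_⟩, fun W' hW' heig => ?_⟩
  · rw [hdet]
    exact zero_lt_one.trans_le (one_le_det_conjTranspose_mul_diagonal_mul hV hone_le)
  · rw [hdet]
    exact det_conjTranspose_mul_diagonal_mul_le_prod hK hV
      (fun a b hab => by gcongr; exact hβdec hab)
      fun n => zero_le_one.trans (hone_le n)
  · rw [conjTranspose_mul_mul_eq_diagonal hW' heig, one_add_smul_diagonal, det_diagonal]
    push_cast
    rfl
end

section
/- Let Σ_T be an N_T×N_T complex Hermitian positive semidefinite matrix with largest eigenvalue α_1, and Σ_R an N_R×N_R complex Hermitian positive semidefinite matrix with eigenvalues β_1 ≥ … ≥ β_{N_R}. Let P > 0 and σ > 0 be real and K ≤ N_R. Then: (i) for every v ∈ ℂ^{N_T} with ‖v‖² = P and every N_R×K complex matrix W with Wᴴ·W = I_K, the quantity vᵀ·Σ_T·v^* is a nonnegative real number and det(I_K + (vᵀ·Σ_T·v^*/σ²)·Wᴴ·Σ_R·W) ≤ ∏_{n=1}^{K} (1 + P·α_1·β_n/σ²); (ii) equality is attained by taking v = √P·u^*, where u is a unit eigenvector of Σ_T for the eigenvalue α_1,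 and taking the columns of W to be orthonormal eigenvectors of Σ_R associated with β_1, …, β_K. -/
open Matrix Finset
open scoped ComplexOrder

lemma det_nonneg' {n : ℕ} {M : Matrix (Fin n) (Fin n) ℂ} (hM : M.PosSemidef) : 0 ≤ M.det := by
  rw [hM.1.det_eq_prod_eigenvalues]
  exact Finset.prod_nonneg fun i _ => by
    simpa using Complex.zero_le_real.mpr (hM.eigenvalues_nonneg i)

lemma det_le_one' {n : ℕ} {M : Matrix (Fin n) (Fin n) ℂ} (hM : M.PosSemidef)
    (h1 : (1 - M).PosSemidef) : M.det ≤ 1 := by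
  have key : ∀ i, hM.1.eigenvalues i ≤ 1 := by
    intro i
    have h2 := h1.re_dotProduct_nonneg ⇑(hM.1.eigenvectorBasis i)
    rw [Matrix.sub_mulVec, Matrix.one_mulVec, dotProduct_sub, map_sub] at h2
    have hn : RCLike.re ((star ⇑(hM.1.eigenvectorBasis i)) ⬝ᵥ ⇑(hM.1.eigenvectorBasis i)) = (1:ℝ) := by
      rw [dotProduct_comm]
      simp only [← EuclideanSpace.inner_eq_star_dotProduct, inner_self_eq_norm_sq_to_K,
        hM.1.eigenvectorBasis.orthonormal.1 i]
      simp
    rw [hM.1.eigenvalues_eq i]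
    rw [hn] at h2
    linarith
  rw [hM.1.det_eq_prod_eigenvalues]
  exact Finset.prod_le_one
    (fun i _ => by simpa using Complex.zero_le_real.mpr (hM.eigenvalues_nonneg i))
    (fun i _ => by simpa using Complex.real_le_real.mpr (key i))

lemma det_mono' {n : ℕ} {M N : Matrix (Fin n) (Fin n) ℂ} (hM : M.PosSemidef) (hN : N.PosDef)
    (hMN : (N - M).PosSemidef) : M.det ≤ N.det := by
  obtain ⟨S, hS, hSS⟩ : ∃ S : Matrix (Fin n) (Fin n) ℂ, S.PosSemidef ∧ S * S = N := by
    open scoped MatrixOrder in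
    exact ⟨CFC.sqrt N, (CFC.sqrt_nonneg N).posSemidef, CFC.sqrt_mul_sqrt_self N hN.posSemidef.nonneg⟩
  have hdetS : IsUnit S.det := by
    have h : S.det * S.det = N.det := by rw [← det_mul, hSS]
    have hN0 : N.det ≠ 0 := ne_of_gt hN.det_pos
    exact isUnit_iff_ne_zero.mpr (fun h0 => hN0 (by rw [← h, h0, zero_mul]))
  have hSinvH : (S⁻¹)ᴴ = S⁻¹ := by rw [Matrix.conjTranspose_nonsing_inv, hS.1]
  have hSinvS : S⁻¹ * S = 1 := Matrix.nonsing_inv_mul S hdetS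
  have hSSinv : S * S⁻¹ = 1 := Matrix.mul_nonsing_inv S hdetS
  set C := S⁻¹ * M * S⁻¹ with hCdef
  have hC : C.PosSemidef := by
    have := hM.conjTranspose_mul_mul_same (B := S⁻¹)
    rwa [hSinvH] at this
  have hNid : S⁻¹ * N * S⁻¹ = 1 := by
    rw [← hSS, ← Matrix.mul_assoc, hSinvS, Matrix.one_mul, hSSinv]
  have h1C : (1 : Matrix (Fin n) (Fin n) ℂ) - C = (S⁻¹)ᴴ * (N - M) * S⁻¹ := by
    rw [hSinvH, Matrix.mul_sub, Matrix.sub_mul, hNid]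
  have hdetC : C.det ≤ 1 := det_le_one' hC (by rw [h1C]; exact hMN.conjTranspose_mul_mul_same _)
  have hMe : M = S * C * S := by
    rw [hCdef]
    simp only [Matrix.mul_assoc, hSinvS, Matrix.mul_one]
    rw [← Matrix.mul_assoc, hSSinv, Matrix.one_mul]
  calc M.det = N.det * C.det := by
        rw [hMe, ← hSS]; simp only [det_mul]; ring
    _ ≤ N.det * 1 := mul_le_mul_of_nonneg_left hdetC (le_of_lt hN.det_pos)
    _ = N.det := mul_one _

lemma det_real' {n : ℕ} {M : Matrix (Fin n) (Fin n) ℂ} (hM : M.PosSemidef) :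
    ∃ r : ℝ, 0 ≤ r ∧ M.det = (r : ℂ) := by
  refine ⟨∏ i, hM.1.eigenvalues i, Finset.prod_nonneg fun i _ => hM.eigenvalues_nonneg i, ?_⟩
  rw [hM.1.det_eq_prod_eigenvalues]
  push_cast
  rfl

lemma key_compression {N K : ℕ} (hK : K ≤ N) (A : Matrix (Fin N) (Fin K) ℂ)
    (hA : Aᴴ * A = 1) (d : Fin N → ℝ) (hdec : Antitone d) (hpos : ∀ n, 0 < d n) :
    (Aᴴ * Matrix.diagonal (fun n => (d n : ℂ)) * A).det
      ≤ ((∏ k : Fin K, d (Fin.castLE hK k) : ℝ) : ℂ) := by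
  rcases Nat.eq_zero_or_pos K with h0 | hKpos
  · subst h0
    simp [Matrix.det_fin_zero]
  -- setup
  have hK' : K - 1 < K := Nat.sub_lt hKpos one_pos
  set nlast : Fin N := Fin.castLE hK ⟨K - 1, hK'⟩ with hnlast
  set x : ℝ := d nlast with hx
  have hxpos : 0 < x := hpos _
  set d' : Fin N → ℝ := fun n => max (d n) x with hd'
  set e : Fin N → ℝ := fun n => d' n - x with he
  have he0 : ∀ n, 0 ≤ e n := fun n => by simp [he, hd', le_max_right]
  have hd'top : ∀ k : Fin K, d' (Fin.castLE hK k) = d (Fin.castLE hK k) := by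
    intro k
    refine max_eq_left (hdec ?_)
    rw [Fin.le_def]
    simpa [hnlast] using Nat.le_sub_one_of_lt (k.isLt)
  have hd'tail : ∀ n : Fin N, K - 1 ≤ (n : ℕ) → d' n = x := by
    intro n hn
    refine max_eq_right (hdec ?_)
    rw [Fin.le_def]
    simpa [hnlast] using hn
  -- matrices
  set D : Matrix (Fin N) (Fin N) ℂ := Matrix.diagonal (fun n => (d n : ℂ)) with hD
  set D' : Matrix (Fin N) (Fin N) ℂ := Matrix.diagonal (fun n => (d' n : ℂ)) with hD'
  set E : Matrix (Fin N) (Fin N) ℂ := Matrix.diagonal (fun n => (e n : ℂ)) with hE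
  set R : Matrix (Fin N) (Fin N) ℂ := Matrix.diagonal (fun n => (Real.sqrt (e n) : ℂ)) with hR
  have hRH : Rᴴ = R := by
    rw [hR, Matrix.diagonal_conjTranspose]
    have : ∀ n, star ((Real.sqrt (e n) : ℂ)) = (Real.sqrt (e n) : ℂ) := fun n => by
      rw [Complex.star_def, Complex.conj_ofReal]
    simp only [Function.comp, Pi.star_def, this]
  have hRR : R * R = E := by
    rw [hR, hE, Matrix.diagonal_mul_diagonal]
    have : ∀ n, (Real.sqrt (e n) : ℂ) * (Real.sqrt (e n) : ℂ) = ((e n : ℝ) : ℂ) := fun n => by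
      rw [← Complex.ofReal_mul, Real.mul_self_sqrt (he0 n)]
    simp only [this]
  set B : Matrix (Fin N) (Fin K) ℂ := R * A with hB
  have hBH : Bᴴ = Aᴴ * R := by rw [hB, Matrix.conjTranspose_mul, hRH]
  have hD'split : D' = (x : ℂ) • 1 + E := by
    rw [hD', hE, Matrix.smul_one_eq_diagonal, Matrix.diagonal_add]
    congr 1; funext n
    rw [he]; push_cast; ring
  set M : Matrix (Fin K) (Fin K) ℂ := Aᴴ * D * A with hM
  set M₂ : Matrix (Fin K) (Fin K) ℂ := Aᴴ * D' * A with hM₂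
  have hMpsd : M.PosSemidef :=
    (Matrix.PosSemidef.diagonal (fun n => Complex.zero_le_real.mpr (hpos n).le)).conjTranspose_mul_mul_same A
  have hdecomp : M₂ = (x : ℂ) • 1 + Bᴴ * B := by
    rw [hM₂, hD'split, hBH, Matrix.mul_add, Matrix.add_mul]
    congr 1
    · rw [Matrix.mul_smul, Matrix.smul_mul, Matrix.mul_one, hA]
    · rw [hB, ← hRR]
      simp only [Matrix.mul_assoc]
  have hxC : (0:ℂ) < (x:ℂ) := Complex.zero_lt_real.mpr hxpos
  have hM₂pd : M₂.PosDef := by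
    rw [hdecomp]
    exact Matrix.PosDef.add_posSemidef
      (by rw [Matrix.smul_one_eq_diagonal]
          exact Matrix.posDef_diagonal_iff.mpr (fun _ => hxC))
      (Matrix.posSemidef_conjTranspose_mul_self B)
  have step1 : M.det ≤ M₂.det := by
    refine det_mono' hMpsd hM₂pd ?_
    have hdiff : M₂ - M = Aᴴ * Matrix.diagonal (fun n => ((d' n - d n : ℝ) : ℂ)) * A := by
      rw [hM₂, hM, hD', hD, ← Matrix.sub_mul, ← Matrix.mul_sub, Matrix.diagonal_sub]
      congr 2
      funext n; push_cast; ring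
    rw [hdiff]
    exact (Matrix.PosSemidef.diagonal
      (fun n => Complex.zero_le_real.mpr (by simp [hd', le_max_left]))).conjTranspose_mul_mul_same A
  -- Sylvester / Weinstein–Aronszajn step
  have hxne : (x:ℂ) ≠ 0 := Complex.ofReal_ne_zero.mpr hxpos.ne'
  set c : ℂ := ((x:ℂ))⁻¹ with hc
  have hxc : (x:ℂ) * c = 1 := mul_inv_cancel₀ hxne
  set t : ℂ := (1 + (c • B) * Bᴴ).det with ht
  have hM₂det : M₂.det = (x:ℂ)^K * t := by
    have h1 : M₂ = (x:ℂ) • (1 + Bᴴ * (c • B)) := by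
      rw [hdecomp, smul_add, Matrix.mul_smul, smul_smul, hxc, one_smul]
    rw [h1, Matrix.det_smul, Fintype.card_fin, ht, Matrix.det_one_add_mul_comm]
  set F : Matrix (Fin N) (Fin N) ℂ := (x:ℂ) • 1 + B * Bᴴ with hF
  have hFdet : F.det = (x:ℂ)^N * t := by
    have h1 : F = (x:ℂ) • (1 + (c • B) * Bᴴ) := by
      rw [hF, smul_add, Matrix.smul_mul, smul_smul, hxc, one_smul]
    rw [h1, Matrix.det_smul, Fintype.card_fin, ht]
  -- step 3 : F.det ≤ G.det
  set G : Matrix (Fin N) (Fin N) ℂ := Matrix.diagonal (fun n => ((x + e n : ℝ) : ℂ)) with hG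
  have hFpsd : F.PosSemidef := by
    rw [hF]
    exact (Matrix.PosDef.add_posSemidef
      (by rw [Matrix.smul_one_eq_diagonal]
          exact Matrix.posDef_diagonal_iff.mpr (fun _ => Complex.zero_lt_real.mpr hxpos))
      (Matrix.posSemidef_self_mul_conjTranspose B)).posSemidef
  have hGpd : G.PosDef := by
    rw [hG]
    exact Matrix.posDef_diagonal_iff.mpr
      (fun n => Complex.zero_lt_real.mpr (by have := he0 n; linarith))
  have hP1 : (1 - A * Aᴴ).PosSemidef := by
    have hAA : A * Aᴴ * (A * Aᴴ) = A * Aᴴ := by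
      rw [Matrix.mul_assoc, ← Matrix.mul_assoc Aᴴ A Aᴴ, hA, Matrix.one_mul]
    have hPP : (1 - A*Aᴴ)ᴴ * (1 - A*Aᴴ) = 1 - A*Aᴴ := by
      rw [Matrix.conjTranspose_sub, Matrix.conjTranspose_one, Matrix.conjTranspose_mul,
        Matrix.conjTranspose_conjTranspose, Matrix.sub_mul, Matrix.one_mul, Matrix.mul_sub,
        Matrix.mul_one, hAA, sub_self, sub_zero]
    exact hPP ▸ Matrix.posSemidef_conjTranspose_mul_self (1 - A * Aᴴ)
  have hGsplit : G = (x : ℂ) • 1 + E := by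
    rw [hG, hE, Matrix.smul_one_eq_diagonal, Matrix.diagonal_add]
    congr 1; funext n; push_cast; ring
  have hdiffF : G - F = Rᴴ * (1 - A * Aᴴ) * R := by
    rw [hRH]
    have hBBH : B * Bᴴ = R * (A * Aᴴ) * R := by
      rw [hB, hBH]; simp only [Matrix.mul_assoc]
    rw [hGsplit, hF, hBBH, Matrix.mul_sub, Matrix.mul_one, Matrix.sub_mul, hRR]
    abel
  have step3 : F.det ≤ G.det :=
    det_mono' hFpsd hGpd (hdiffF ▸ hP1.conjTranspose_mul_mul_same R)
  have hGdet : G.det = ((∏ n : Fin N, (x + e n) : ℝ) : ℂ) := by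
    rw [hG, Matrix.det_diagonal]; push_cast; rfl
  -- product bookkeeping
  set pK : ℝ := ∏ k : Fin K, d (Fin.castLE hK k) with hpK
  have hprod : (∏ n : Fin N, (x + e n)) = pK * x ^ (N - K) := by
    set h : ℕ → ℝ := fun i => if hi : i < N then d' ⟨i, hi⟩ else 1 with hh
    have e1 : (∏ n : Fin N, (x + e n)) = ∏ n : Fin N, h ↑n := by
      refine Finset.prod_congr rfl (fun n _ => ?_)
      rw [hh]
      simp only [n.isLt, dif_pos]
      rw [he]; ring
    have e2 : ∏ n : Fin N, h ↑n = ∏ i ∈ Finset.range N, h i :=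
      Fin.prod_univ_eq_prod_range h N
    have e3 : ∏ i ∈ Finset.range N, h i
        = (∏ i ∈ Finset.range K, h i) * ∏ i ∈ Finset.Ico K N, h i := by
      rw [Finset.range_eq_Ico, ← Finset.prod_Ico_consecutive h (Nat.zero_le K) hK, Finset.range_eq_Ico]
    have e4 : ∏ i ∈ Finset.range K, h i = pK := by
      rw [hpK, ← Fin.prod_univ_eq_prod_range h K]
      refine Finset.prod_congr rfl (fun k _ => ?_)
      rw [hh]
      simp only [Nat.lt_of_lt_of_le k.isLt hK, dif_pos]
      have : (⟨(k:ℕ), Nat.lt_of_lt_of_le k.isLt hK⟩ : Fin N) = Fin.castLE hK k := rfl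
      rw [this, hd'top]
    have e5 : ∏ i ∈ Finset.Ico K N, h i = x ^ (N - K) := by
      rw [Finset.prod_congr rfl (fun i hi => ?_), Finset.prod_const, Nat.card_Ico]
      rw [Finset.mem_Ico] at hi
      rw [hh]
      simp only [hi.2, dif_pos]
      exact hd'tail _ (le_trans (Nat.sub_le K 1) hi.1)
    rw [e1, e2, e3, e4, e5]
  -- combine
  obtain ⟨p2, hp20, hp2⟩ := det_real' hM₂pd.posSemidef
  have hcomb : ((x ^ N * p2 : ℝ) : ℂ) ≤ ((pK * x ^ (N - K) * x ^ K : ℝ) : ℂ) := by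
    push_cast
    calc ((x:ℂ))^N * (p2:ℂ) = (x:ℂ)^K * F.det := by
          rw [← hp2, hM₂det, hFdet]; ring
      _ ≤ (x:ℂ)^K * ((pK * x ^ (N - K) : ℝ) : ℂ) := by
          refine mul_le_mul_of_nonneg_left ?_ (by positivity)
          rw [← hprod, ← hGdet]; exact step3
      _ = (pK:ℂ) * ((x:ℝ):ℂ) ^ (N - K) * (x:ℂ)^K := by push_cast; ring
  rw [Complex.real_le_real] at hcomb
  have hfin : p2 ≤ pK := by
    have hxN : (0:ℝ) < x ^ N := by positivity
    have : pK * x ^ (N - K) * x ^ K = pK * x ^ N := by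
      rw [mul_assoc, ← pow_add, Nat.sub_add_cancel hK]
    rw [this] at hcomb
    nlinarith
  calc M.det ≤ M₂.det := step1
    _ = (p2 : ℂ) := hp2
    _ ≤ (pK : ℂ) := Complex.real_le_real.mpr hfin
lemma qf_eq {N_T : ℕ} (U_T : Matrix (Fin N_T) (Fin N_T) ℂ) (α : Fin N_T → ℝ)
    (v : Fin N_T → ℂ) :
    v ⬝ᵥ ((U_T * Matrix.diagonal (fun n => (α n : ℂ)) * U_Tᴴ) *ᵥ star v)
      = ((∑ n, α n * Complex.normSq ((U_Tᴴ *ᵥ star v) n) : ℝ) : ℂ) := by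
  set y : Fin N_T → ℂ := U_Tᴴ *ᵥ star v with hy
  have hyv : star y = v ᵥ* U_T := by
    rw [hy, Matrix.mulVec_conjTranspose, star_star, star_star]
  rw [← Matrix.mulVec_mulVec, ← Matrix.mulVec_mulVec, Matrix.dotProduct_mulVec, ← hyv, ← hy]
  have key : ∀ n, star y n * (Matrix.diagonal (fun n => (α n : ℂ)) *ᵥ y) n
      = ((α n * Complex.normSq (y n) : ℝ) : ℂ) := by
    intro n
    rw [Matrix.mulVec_diagonal, Pi.star_apply, Complex.star_def]
    push_cast
    rw [Complex.normSq_eq_conj_mul_self]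
    ring
  rw [dotProduct]
  push_cast
  exact Finset.sum_congr rfl fun n _ => by
    have := key n; push_cast at this; exact this

lemma star_dot_self {m : ℕ} (w : Fin m → ℂ) :
    star w ⬝ᵥ w = ((∑ n, Complex.normSq (w n) : ℝ) : ℂ) := by
  rw [dotProduct]
  push_cast
  exact Finset.sum_congr rfl fun n _ => by
    rw [Pi.star_apply, Complex.star_def, ← Complex.normSq_eq_conj_mul_self]

lemma norm_pres {N_T : ℕ} (U_T : Matrix (Fin N_T) (Fin N_T) ℂ)
    (hcomm : U_T * U_Tᴴ = 1) (v : Fin N_T → ℂ) :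
    (∑ n, Complex.normSq ((U_Tᴴ *ᵥ star v) n)) = ∑ n, Complex.normSq (v n) := by
  set y : Fin N_T → ℂ := U_Tᴴ *ᵥ star v with hy
  have hyv : star y = v ᵥ* U_T := by
    rw [hy, Matrix.mulVec_conjTranspose, star_star, star_star]
  have h1 : star y ⬝ᵥ y = v ⬝ᵥ star v := by
    rw [hyv, hy, ← Matrix.dotProduct_mulVec, Matrix.mulVec_mulVec, hcomm, Matrix.one_mulVec]
  have h2 : v ⬝ᵥ star v = ((∑ n, Complex.normSq (v n) : ℝ) : ℂ) := by
    rw [dotProduct]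
    push_cast
    exact Finset.sum_congr rfl fun n _ => by
      rw [Pi.star_apply, Complex.star_def, ← Complex.mul_conj]
  rw [star_dot_self, h2] at h1
  exact_mod_cast h1
/-- Let `Σ_T = U_T·diag(α)·U_Tᴴ` and `Σ_R = U_R·diag(β)·U_Rᴴ` be
Hermitian PSD with decreasing nonnegative eigenvalues (so `α 0` is the largest
eigenvalue of `Σ_T`). Then (i) for every precoder `v` with `‖v‖² = P` and combiner `W`
with orthonormal columns, `vᵀ·Σ_T·v^*` is a nonnegative real and
`det(I_K + (vᵀ·Σ_T·v^*/σ²)·Wᴴ·Σ_R·W) ≤ ∏_{n=1}^K (1 + P·α_1·β_n/σ²)`;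
(ii) equality is attained by `v = √P·u^*` with `u` the first column of `U_T` (a unit
eigenvector for `α_1`) and `W` the first `K` columns of `U_R` (orthonormal eigenvectors
for `β_1, …, β_K`). -/
theorem stmt_13 (N_T N_R K : ℕ) (hNT : 0 < N_T) (hNR : 0 < N_R) (hK : K ≤ N_R)
    (P σ : ℝ) (hP : 0 < P) (hσ : 0 < σ)
    (SgmT U_T : Matrix (Fin N_T) (Fin N_T) ℂ)
    (SgmR U_R : Matrix (Fin N_R) (Fin N_R) ℂ)
    (α : Fin N_T → ℝ) (hαdec : Antitone α) (hα0 : ∀ n, 0 ≤ α n)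
    (β : Fin N_R → ℝ) (hβdec : Antitone β) (hβ0 : ∀ n, 0 ≤ β n)
    (hUT : U_Tᴴ * U_T = 1) (hUR : U_Rᴴ * U_R = 1)
    (hSgmT : SgmT = U_T * Matrix.diagonal (fun n => (α n : ℂ)) * U_Tᴴ)
    (hSgmR : SgmR = U_R * Matrix.diagonal (fun n => (β n : ℂ)) * U_Rᴴ) :
    (∀ (v : Fin N_T → ℂ) (W : Matrix (Fin N_R) (Fin K) ℂ),
        (∑ n : Fin N_T, ‖v n‖ ^ 2) = P → Wᴴ * W = 1 →
        0 ≤ v ⬝ᵥ (SgmT *ᵥ star v) ∧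
        (1 + ((v ⬝ᵥ (SgmT *ᵥ star v)) / ((σ : ℂ) ^ 2)) • (Wᴴ * SgmR * W)).det ≤
          ((∏ k : Fin K, (1 + P * α ⟨0, hNT⟩ * β (Fin.castLE hK k) / σ ^ 2) : ℝ) : ℂ)) ∧
    (∀ (v : Fin N_T → ℂ) (W : Matrix (Fin N_R) (Fin K) ℂ),
        v = (fun n => (Real.sqrt P : ℂ) * star (U_T n ⟨0, hNT⟩)) →
        W = Matrix.of (fun i k => U_R i (Fin.castLE hK k)) →
        (1 + ((v ⬝ᵥ (SgmT *ᵥ star v)) / ((σ : ℂ) ^ 2)) • (Wᴴ * SgmR * W)).det =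
          ((∏ k : Fin K, (1 + P * α ⟨0, hNT⟩ * β (Fin.castLE hK k) / σ ^ 2) : ℝ) : ℂ)) := by
  subst hSgmT hSgmR
  have hUTU : U_T * U_Tᴴ = 1 := mul_eq_one_comm.mp hUT
  have hURU : U_R * U_Rᴴ = 1 := mul_eq_one_comm.mp hUR
  set z0 : Fin N_T := ⟨0, hNT⟩ with hz0
  constructor
  · -- part (i)
    intro v W hv hW
    set y : Fin N_T → ℂ := U_Tᴴ *ᵥ star v with hy
    set r : ℝ := ∑ n, α n * Complex.normSq (y n) with hr
    have hqf : v ⬝ᵥ ((U_T * Matrix.diagonal (fun n => (α n : ℂ)) * U_Tᴴ) *ᵥ star v) = (r : ℂ) :=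
      qf_eq U_T α v
    have hr0 : 0 ≤ r :=
      Finset.sum_nonneg fun n _ => mul_nonneg (hα0 n) (Complex.normSq_nonneg _)
    have hsum : (∑ n, Complex.normSq (y n)) = P := by
      rw [hy, norm_pres U_T hUTU v, ← hv]
      exact Finset.sum_congr rfl fun n _ => by
        rw [Complex.normSq_eq_norm_sq]
    have hrle : r ≤ P * α z0 := by
      have : r ≤ ∑ n, α z0 * Complex.normSq (y n) := by
        refine Finset.sum_le_sum fun n _ => ?_
        exact mul_le_mul_of_nonneg_right (hαdec (by rw [Fin.le_def]; exact Nat.zero_le _))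
          (Complex.normSq_nonneg _)
      rw [← Finset.mul_sum, hsum] at this
      linarith
    refine ⟨by rw [hqf]; exact Complex.zero_le_real.mpr hr0, ?_⟩
    -- the determinant bound
    set A : Matrix (Fin N_R) (Fin K) ℂ := U_Rᴴ * W with hA
    have hAA : Aᴴ * A = 1 := by
      rw [hA, Matrix.conjTranspose_mul, Matrix.conjTranspose_conjTranspose]
      have : Wᴴ * U_R * (U_Rᴴ * W) = Wᴴ * (U_R * U_Rᴴ) * W := by
        simp only [Matrix.mul_assoc]
      rw [this, hURU, Matrix.mul_one, hW]
    set g : Fin N_R → ℝ := fun n => 1 + (r / σ ^ 2) * β n with hg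
    have hc0 : 0 ≤ r / σ ^ 2 := div_nonneg hr0 (by positivity)
    have hgdec : Antitone g := fun a b hab => by
      have := mul_le_mul_of_nonneg_left (hβdec hab) hc0
      simpa [hg] using this
    have hgpos : ∀ n, 0 < g n := fun n => by
      have := mul_nonneg hc0 (hβ0 n)
      simp only [hg]; linarith
    have hid : (1 : Matrix (Fin K) (Fin K) ℂ)
        + ((v ⬝ᵥ ((U_T * Matrix.diagonal (fun n => (α n : ℂ)) * U_Tᴴ) *ᵥ star v)) / ((σ : ℂ) ^ 2))
          • (Wᴴ * (U_R * Matrix.diagonal (fun n => (β n : ℂ)) * U_Rᴴ) * W)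
        = Aᴴ * Matrix.diagonal (fun n => (g n : ℂ)) * A := by
      have hcast : (v ⬝ᵥ ((U_T * Matrix.diagonal (fun n => (α n : ℂ)) * U_Tᴴ) *ᵥ star v)) / ((σ : ℂ) ^ 2)
          = ((r / σ ^ 2 : ℝ) : ℂ) := by
        rw [hqf]; push_cast; ring
      have hdiag : Matrix.diagonal (fun n => (g n : ℂ))
          = 1 + ((r / σ ^ 2 : ℝ) : ℂ) • Matrix.diagonal (fun n => (β n : ℂ)) := by
        rw [← Matrix.diagonal_one, ← Matrix.diagonal_smul, Matrix.diagonal_add]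
        congr 1
        funext n
        simp only [hg, Pi.add_apply, Pi.smul_apply, smul_eq_mul]
        push_cast
        ring
      rw [hcast, hdiag, hA, Matrix.conjTranspose_mul, Matrix.conjTranspose_conjTranspose,
        Matrix.mul_add, Matrix.add_mul, Matrix.mul_one]
      congr 1
      · have : Wᴴ * U_R * (U_Rᴴ * W) = Wᴴ * (U_R * U_Rᴴ) * W := by
          simp only [Matrix.mul_assoc]
        rw [this, hURU, Matrix.mul_one, hW]
      · rw [Matrix.mul_smul, Matrix.smul_mul]
        congr 1
        simp only [Matrix.mul_assoc]
    rw [hid]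
    calc (Aᴴ * Matrix.diagonal (fun n => (g n : ℂ)) * A).det
        ≤ ((∏ k : Fin K, g (Fin.castLE hK k) : ℝ) : ℂ) :=
          key_compression hK A hAA g hgdec hgpos
      _ ≤ ((∏ k : Fin K, (1 + P * α z0 * β (Fin.castLE hK k) / σ ^ 2) : ℝ) : ℂ) := by
          rw [Complex.real_le_real]
          refine Finset.prod_le_prod (fun k _ => (hgpos _).le) (fun k _ => ?_)
          simp only [hg]
          have h1 : r * β (Fin.castLE hK k) ≤ P * α z0 * β (Fin.castLE hK k) :=
            mul_le_mul_of_nonneg_right hrle (hβ0 _)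
          have h2 : (0:ℝ) < σ ^ 2 := by positivity
          rw [div_mul_eq_mul_div, div_eq_mul_inv, div_eq_mul_inv]
          have h3 : r * β (Fin.castLE hK k) * (σ^2)⁻¹ ≤ P * α z0 * β (Fin.castLE hK k) * (σ^2)⁻¹ :=
            mul_le_mul_of_nonneg_right h1 (inv_nonneg.mpr h2.le)
          linarith
  · intro v W hvdef hWdef
    subst hvdef hWdef
    set u : Fin N_T → ℂ := fun n => U_T n z0 with hu
    have hsv : star (fun n => (Real.sqrt P : ℂ) * star (U_T n z0))
        = fun n => (Real.sqrt P : ℂ) * U_T n z0 := by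
      funext n
      simp [star_mul', Complex.star_def, Complex.conj_ofReal]
    have huv : u = U_T *ᵥ Pi.single z0 1 := by
      funext n
      rw [Matrix.mulVec_single]
      simp [hu]
    have hy1 : U_Tᴴ *ᵥ (fun n => (Real.sqrt P : ℂ) * U_T n z0)
        = fun n => (Real.sqrt P : ℂ) * (Pi.single z0 1 : Fin N_T → ℂ) n := by
      have h1 : (fun n => (Real.sqrt P : ℂ) * U_T n z0) = (Real.sqrt P : ℂ) • u := by
        funext n; simp [hu]
      rw [h1, Matrix.mulVec_smul, huv, Matrix.mulVec_mulVec, hUT, Matrix.one_mulVec]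
      funext n; simp
    have hqfv : (fun n => (Real.sqrt P : ℂ) * star (U_T n z0)) ⬝ᵥ
        ((U_T * Matrix.diagonal (fun n => (α n : ℂ)) * U_Tᴴ) *ᵥ
          star (fun n => (Real.sqrt P : ℂ) * star (U_T n z0)))
        = ((P * α z0 : ℝ) : ℂ) := by
      rw [qf_eq]
      congr 1
      rw [hsv, hy1]
      rw [Finset.sum_eq_single_of_mem z0 (Finset.mem_univ _)]
      · simp only [Pi.single_eq_same, mul_one]
        rw [show ((Real.sqrt P : ℝ) : ℂ) = Complex.ofReal (Real.sqrt P) from rfl]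
        rw [Complex.normSq_ofReal, Real.mul_self_sqrt hP.le]
        ring
      · intro n _ hn
        simp [Pi.single_eq_of_ne hn]
    -- the combiner part
    set W : Matrix (Fin N_R) (Fin K) ℂ := Matrix.of (fun i k => U_R i (Fin.castLE hK k)) with hWd
    have hURW : U_Rᴴ * W = Matrix.of (fun n k => (1 : Matrix (Fin N_R) (Fin N_R) ℂ) n (Fin.castLE hK k)) := by
      ext n k
      have h1 : (U_Rᴴ * U_R) n (Fin.castLE hK k) = (1 : Matrix (Fin N_R) (Fin N_R) ℂ) n (Fin.castLE hK k) := by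
        rw [hUR]
      simpa [Matrix.mul_apply, Matrix.conjTranspose_apply, hWd] using h1
    have hform : Wᴴ * (U_R * Matrix.diagonal (fun n => (β n : ℂ)) * U_Rᴴ) * W
        = (U_Rᴴ * W)ᴴ * Matrix.diagonal (fun n => (β n : ℂ)) * (U_Rᴴ * W) := by
      rw [Matrix.conjTranspose_mul, Matrix.conjTranspose_conjTranspose]
      simp only [Matrix.mul_assoc]
    have hdiagW : Wᴴ * (U_R * Matrix.diagonal (fun n => (β n : ℂ)) * U_Rᴴ) * W
        = Matrix.diagonal (fun k => (β (Fin.castLE hK k) : ℂ)) := by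
      rw [hform, hURW]
      ext k l
      simp only [Matrix.mul_apply, Matrix.conjTranspose_apply, Matrix.of_apply,
        Matrix.diagonal_apply, Matrix.one_apply, apply_ite, star_one, star_zero,
        ite_mul, one_mul, zero_mul, mul_ite, mul_zero, mul_one]
      simp only [Finset.sum_ite_eq, Finset.sum_ite_eq', Finset.mem_univ, if_true]
      by_cases hkl : k = l
      · subst hkl; simp
      · have hne : Fin.castLE hK k ≠ Fin.castLE hK l := fun h => hkl (Fin.castLE_injective hK h)
        simp [hkl, hne, hne.symm, Ne.symm hkl]
    rw [hqfv, hdiagW]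
    have hc : ((P * α z0 : ℝ) : ℂ) / ((σ : ℂ) ^ 2) = ((P * α z0 / σ ^ 2 : ℝ) : ℂ) := by
      push_cast; ring
    rw [hc, ← Matrix.diagonal_one, ← Matrix.diagonal_smul, Matrix.diagonal_add,
      Matrix.det_diagonal]
    push_cast
    refine Finset.prod_congr rfl fun k _ => ?_
    simp only [Pi.add_apply, Pi.smul_apply, Pi.one_apply, smul_eq_mul]
    push_cast
    ring
end
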